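/- If (X_1, X_2, Y_1, Y_2) has joint density f*(x_1,x_2,y_1,y_2) = 1{0≤x_1≤x_2≤1}·1{0≤y_2<y_1≤1} + 1{0≤x_2<x_1≤1}·1{1<y_2<y_1≤2} + 1{1<x_1≤x_2≤2}·1{0≤y_1≤y_2≤1} + 1{1<x_2<x_1≤2}·1{1<y_1≤y_2≤2}, then P((X_1 ≤ X_2 and Y_1 ≤ Y_2) or (X_2 < X_1 and Y_2 < Y_1)) = 1/2. -/

import Mathlib

/-!
On the event that the patterns agree, the first and fourth summands of `f*` vanish (they pair
opposite patterns), while the second and third are indicators of products of triangles that lie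
inside the event and are disjoint. Each triangle has area `1/2` whatever its boundary (it is
squeezed between an open and a closed triangle of that area), so the probability is
`1/2 · 1/2 + 1/2 · 1/2 = 1/2`.
-/

open MeasureTheory

noncomputable def ind (P : Prop) : ℝ := by classical exact if P then 1 else 0

/-- The density `f*` from the counterexample. -/
noncomputable def fstar (x₁ x₂ y₁ y₂ : ℝ) : ℝ :=
  ind (0 ≤ x₁ ∧ x₁ ≤ x₂ ∧ x₂ ≤ 1) * ind (0 ≤ y₂ ∧ y₂ < y₁ ∧ y₁ ≤ 1) +
  ind (0 ≤ x₂ ∧ x₂ < x₁ ∧ x₁ ≤ 1) * ind (1 < y₂ ∧ y₂ < y₁ ∧ y₁ ≤ 2) +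
  ind (1 < x₁ ∧ x₁ ≤ x₂ ∧ x₂ ≤ 2) * ind (0 ≤ y₁ ∧ y₁ ≤ y₂ ∧ y₂ ≤ 1) +
  ind (1 < x₂ ∧ x₂ < x₁ ∧ x₁ ≤ 2) * ind (1 < y₁ ∧ y₁ ≤ y₂ ∧ y₂ ≤ 2)

open Set

theorem volume_regionBetween_cc_eq_lintegral {α : Type*} [MeasurableSpace α] {μ : Measure α}
    {f g : α → ℝ} {s : Set α} (hf : Measurable f) (hg : Measurable g) (hs : MeasurableSet s) :
    μ.prod volume {p : α × ℝ | p.1 ∈ s ∧ p.2 ∈ Icc (f p.1) (g p.1)} =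
      ∫⁻ y in s, ENNReal.ofReal (g y - f y) ∂μ := by
  rw [Measure.prod_apply (measurableSet_region_between_cc hf hg hs), ← lintegral_indicator hs]
  congr 1 with x
  by_cases hx : x ∈ s
  · simp only [preimage_ofPred_eq, hx, true_and, indicator_of_mem]
    exact Real.volume_Icc
  · simp [hx]

theorem volume_preimage_swap {α β : Type*} [MeasureSpace α] [MeasureSpace β]
    [SFinite (volume : Measure α)] [SFinite (volume : Measure β)] (T : Set (β × α)) :
    volume (Prod.swap ⁻¹' T) = volume T :=
  Measure.measurePreserving_swap.measure_preimage_emb MeasurableEquiv.prodComm.measurableEmbedding T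

theorem setLIntegral_Ioo_ofReal_sub_left {a b : ℝ} (hab : a ≤ b) :
    ∫⁻ u in Ioo a b, ENNReal.ofReal (u - a) = ENNReal.ofReal ((b - a) ^ 2 / 2) := by
  rw [← ofReal_integral_eq_lintegral_ofReal
      ((by fun_prop : Continuous fun u : ℝ => u - a).integrableOn_Icc.mono_set Ioo_subset_Icc_self)
      ((ae_restrict_iff' measurableSet_Ioo).mpr (ae_of_all _ fun u hu => sub_nonneg.mpr hu.1.le)),
    ← integral_Ioc_eq_integral_Ioo, ← intervalIntegral.integral_of_le hab,
    intervalIntegral.integral_comp_sub_right (fun x => x), integral_id]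
  ring_nf

def openTriangle (a b : ℝ) : Set (ℝ × ℝ) := {p | p.1 ∈ Ioo a b ∧ p.2 ∈ Ioo a p.1}

def closedTriangle (a b : ℝ) : Set (ℝ × ℝ) := {p | p.1 ∈ Icc a b ∧ p.2 ∈ Icc a p.1}

theorem volume_openTriangle {a b : ℝ} (hab : a ≤ b) :
    volume (openTriangle a b) = ENNReal.ofReal ((b - a) ^ 2 / 2) := by
  rw [Measure.volume_eq_prod]
  exact (volume_regionBetween_eq_lintegral' measurable_const measurable_id measurableSet_Ioo).trans
    (setLIntegral_Ioo_ofReal_sub_left hab)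

theorem volume_closedTriangle {a b : ℝ} (hab : a ≤ b) :
    volume (closedTriangle a b) = ENNReal.ofReal ((b - a) ^ 2 / 2) := by
  rw [Measure.volume_eq_prod, closedTriangle,
    volume_regionBetween_cc_eq_lintegral (f := fun _ => a) (g := fun u => u) measurable_const
      measurable_id measurableSet_Icc,
    Measure.restrict_congr_set Ioo_ae_eq_Icc.symm]
  exact setLIntegral_Ioo_ofReal_sub_left hab

theorem volume_eq_of_openTriangle_subset_of_subset_closedTriangle {T : Set (ℝ × ℝ)} {a b : ℝ}
    (hab : a ≤ b) (hlo : openTriangle a b ⊆ T) (hhi : T ⊆ closedTriangle a b) :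
    volume T = ENNReal.ofReal ((b - a) ^ 2 / 2) :=
  le_antisymm ((measure_mono hhi).trans_eq (volume_closedTriangle hab))
    ((volume_openTriangle hab).symm.trans_le (measure_mono hlo))

theorem ind_mul_ind (P Q : Prop) : ind P * ind Q = ind (P ∧ Q) := by
  by_cases hP : P <;> by_cases hQ : Q <;> simp [ind, hP, hQ]

theorem ind_eq_zero {P : Prop} (h : ¬P) : ind P = 0 := by
  simp [ind, h]

theorem ind_add_ind {P Q : Prop} (h : ¬(P ∧ Q)) : ind P + ind Q = ind (P ∨ Q) := by
  by_cases hP : P <;> by_cases hQ : Q <;> simp_all [ind]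

theorem ofReal_ind_mem {α : Type*} (s : Set α) (a : α) :
    ENNReal.ofReal (ind (a ∈ s)) = s.indicator 1 a := by
  by_cases ha : a ∈ s <;> simp [ind, ha]

def patternsAgree : Set (ℝ × ℝ × ℝ × ℝ) :=
  {p | (p.1 ≤ p.2.1 ∧ p.2.2.1 ≤ p.2.2.2) ∨ (p.2.1 < p.1 ∧ p.2.2.2 < p.2.2.1)}

def descLow : Set (ℝ × ℝ) := {z | 0 ≤ z.2 ∧ z.2 < z.1 ∧ z.1 ≤ 1}

def descHigh : Set (ℝ × ℝ) := {z | 1 < z.2 ∧ z.2 < z.1 ∧ z.1 ≤ 2}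

def ascLow : Set (ℝ × ℝ) := {z | 0 ≤ z.1 ∧ z.1 ≤ z.2 ∧ z.2 ≤ 1}

def ascHigh : Set (ℝ × ℝ) := {z | 1 < z.1 ∧ z.1 ≤ z.2 ∧ z.2 ≤ 2}

def agreeSupport : Set (ℝ × ℝ × ℝ × ℝ) :=
  MeasurableEquiv.prodAssoc.symm ⁻¹' (descLow ×ˢ descHigh ∪ ascHigh ×ˢ ascLow)

theorem measurableSet_patternsAgree : MeasurableSet patternsAgree := by
  unfold patternsAgree; measurability

theorem measurableSet_agreeSupport : MeasurableSet agreeSupport := by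
  unfold agreeSupport descLow descHigh ascLow ascHigh; measurability

theorem agreeSupport_subset_patternsAgree : agreeSupport ⊆ patternsAgree := by
  rintro ⟨x₁, x₂, y₁, y₂⟩ (⟨⟨-, hx, -⟩, -, hy, -⟩ | ⟨⟨-, hx, -⟩, -, hy, -⟩)
  · exact Or.inr ⟨hx, hy⟩
  · exact Or.inl ⟨hx, hy⟩

theorem ofReal_fstar_eq_indicator_agreeSupport {p : ℝ × ℝ × ℝ × ℝ} (hp : p ∈ patternsAgree) :
    ENNReal.ofReal (fstar p.1 p.2.1 p.2.2.1 p.2.2.2) = agreeSupport.indicator 1 p := by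
  obtain ⟨x₁, x₂, y₁, y₂⟩ := p
  have h₁ : ¬((0 ≤ x₁ ∧ x₁ ≤ x₂ ∧ x₂ ≤ 1) ∧ (0 ≤ y₂ ∧ y₂ < y₁ ∧ y₁ ≤ 1)) := by
    rintro ⟨⟨-, hx, -⟩, -, hy, -⟩
    rcases hp with ⟨-, h⟩ | ⟨h, -⟩ <;> linarith
  have h₄ : ¬((1 < x₂ ∧ x₂ < x₁ ∧ x₁ ≤ 2) ∧ (1 < y₁ ∧ y₁ ≤ y₂ ∧ y₂ ≤ 2)) := by
    rintro ⟨⟨-, hx, -⟩, -, hy, -⟩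
    rcases hp with ⟨h, -⟩ | ⟨-, h⟩ <;> linarith
  have h₂₃ : ¬(((0 ≤ x₂ ∧ x₂ < x₁ ∧ x₁ ≤ 1) ∧ (1 < y₂ ∧ y₂ < y₁ ∧ y₁ ≤ 2)) ∧
      ((1 < x₁ ∧ x₁ ≤ x₂ ∧ x₂ ≤ 2) ∧ (0 ≤ y₁ ∧ y₁ ≤ y₂ ∧ y₂ ≤ 1))) := by
    rintro ⟨⟨⟨-, hx, -⟩, -⟩, ⟨-, hx', -⟩, -⟩
    linarith
  rw [fstar, ind_mul_ind, ind_mul_ind, ind_mul_ind, ind_mul_ind, ind_eq_zero h₁, ind_eq_zero h₄,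
    zero_add, add_zero, ind_add_ind h₂₃, ← ofReal_ind_mem]
  rfl

theorem volume_descLow : volume descLow = ENNReal.ofReal (1 / 2) := by
  refine (volume_eq_of_openTriangle_subset_of_subset_closedTriangle zero_le_one ?_ ?_).trans
    (by norm_num)
  · rintro ⟨u, v⟩ ⟨⟨-, hu⟩, hv, hvu⟩
    exact ⟨hv.le, hvu, hu.le⟩
  · rintro ⟨u, v⟩ ⟨hv, hvu, hu⟩
    exact ⟨⟨hv.trans hvu.le, hu⟩, hv, hvu.le⟩

theorem volume_descHigh : volume descHigh = ENNReal.ofReal (1 / 2) := by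
  refine (volume_eq_of_openTriangle_subset_of_subset_closedTriangle one_le_two ?_ ?_).trans
    (by norm_num)
  · rintro ⟨u, v⟩ ⟨⟨-, hu⟩, hv, hvu⟩
    exact ⟨hv, hvu, hu.le⟩
  · rintro ⟨u, v⟩ ⟨hv, hvu, hu⟩
    exact ⟨⟨(hv.trans hvu).le, hu⟩, hv.le, hvu.le⟩

theorem volume_ascLow : volume ascLow = ENNReal.ofReal (1 / 2) := by
  rw [← volume_preimage_swap]
  refine (volume_eq_of_openTriangle_subset_of_subset_closedTriangle zero_le_one ?_ ?_).trans
    (by norm_num)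
  · rintro ⟨u, v⟩ ⟨⟨-, hu⟩, hv, hvu⟩
    exact ⟨hv.le, hvu.le, hu.le⟩
  · rintro ⟨u, v⟩ ⟨hv, hvu, hu⟩
    exact ⟨⟨hv.trans hvu, hu⟩, hv, hvu⟩

theorem volume_ascHigh : volume ascHigh = ENNReal.ofReal (1 / 2) := by
  rw [← volume_preimage_swap]
  refine (volume_eq_of_openTriangle_subset_of_subset_closedTriangle one_le_two ?_ ?_).trans
    (by norm_num)
  · rintro ⟨u, v⟩ ⟨⟨-, hu⟩, hv, hvu⟩
    exact ⟨hv, hvu.le, hu.le⟩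
  · rintro ⟨u, v⟩ ⟨hv, hvu, hu⟩
    exact ⟨⟨(hv.trans_le hvu).le, hu⟩, hv.le, hvu⟩

theorem volume_agreeSupport : volume agreeSupport = 1 / 2 := by
  have hdisj : Disjoint (descLow ×ˢ descHigh) (ascHigh ×ˢ ascLow) :=
    disjoint_prod.mpr <| Or.inl <| disjoint_left.mpr fun _ h h' => h.2.1.not_ge h'.2.1
  rw [agreeSupport, volume_preserving_prodAssoc.symm.measure_preimage_equiv,
    measure_union hdisj (by unfold ascHigh ascLow; measurability), Measure.volume_eq_prod,
    Measure.prod_prod, Measure.prod_prod, volume_descLow, volume_descHigh, volume_ascHigh,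
    volume_ascLow, ← ENNReal.ofReal_mul (by norm_num),
    ← ENNReal.ofReal_add (by norm_num) (by norm_num)]
  norm_num
  rw [one_div, ENNReal.ofReal_inv_of_pos two_pos, ENNReal.ofReal_ofNat]

theorem coincident_patterns_prob_half_general {Ω : Type*} [MeasurableSpace Ω]
    (ℙ : Measure Ω) (X₁ X₂ Y₁ Y₂ : Ω → ℝ)
    (hV : Measurable fun ω => (X₁ ω, X₂ ω, Y₁ ω, Y₂ ω))
    (hlaw : Measure.map (fun ω => (X₁ ω, X₂ ω, Y₁ ω, Y₂ ω)) ℙ =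
      volume.withDensity (fun p : ℝ × ℝ × ℝ × ℝ =>
        ENNReal.ofReal (fstar p.1 p.2.1 p.2.2.1 p.2.2.2))) :
    ℙ {ω | (X₁ ω ≤ X₂ ω ∧ Y₁ ω ≤ Y₂ ω) ∨ (X₂ ω < X₁ ω ∧ Y₂ ω < Y₁ ω)} = 1 / 2 := by
  change ℙ ((fun ω => (X₁ ω, X₂ ω, Y₁ ω, Y₂ ω)) ⁻¹' patternsAgree) = 1 / 2
  rw [← Measure.map_apply hV measurableSet_patternsAgree, hlaw,
    withDensity_apply _ measurableSet_patternsAgree,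
    setLIntegral_congr_fun measurableSet_patternsAgree
      fun _ => ofReal_fstar_eq_indicator_agreeSupport,
    lintegral_indicator_one measurableSet_agreeSupport,
    Measure.restrict_eq_self _ agreeSupport_subset_patternsAgree, volume_agreeSupport]

/-- Under the density `f*`, the ordinal patterns of `(X₁,X₂)` and `(Y₁,Y₂)` coincide with
probability `1/2`. -/
theorem coincident_patterns_prob_half {Ω : Type*} [MeasurableSpace Ω]
    (ℙ : Measure Ω) [IsProbabilityMeasure ℙ] (X₁ X₂ Y₁ Y₂ : Ω → ℝ)
    (hV : Measurable fun ω => (X₁ ω, X₂ ω, Y₁ ω, Y₂ ω))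
    (hlaw : Measure.map (fun ω => (X₁ ω, X₂ ω, Y₁ ω, Y₂ ω)) ℙ =
      volume.withDensity (fun p : ℝ × ℝ × ℝ × ℝ =>
        ENNReal.ofReal (fstar p.1 p.2.1 p.2.2.1 p.2.2.2))) :
    ℙ {ω | (X₁ ω ≤ X₂ ω ∧ Y₁ ω ≤ Y₂ ω) ∨ (X₂ ω < X₁ ω ∧ Y₂ ω < Y₁ ω)} = 1 / 2 :=
  coincident_patterns_prob_half_general ℙ X₁ X₂ Y₁ Y₂ hV hlaw
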